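/- For natural numbers n ≤ m with m > 0, the probability of n distinct draws satisfies the bounds exp(-n(n-1)/(m-n+1) · (1/2)) ≤ ∏_{k=0}^{n-1}(1 - k/m) ≤ exp(-n(n-1)/(2m)), showing P(n,m) ≈ e^{-n(n-1)/(2m)} when m ≫ n. -/

import Mathlib

theorem distinct_draws_exp_bounds (n m : ℕ) (hn : 0 < n) (hnm : n ≤ m) :
    Real.exp (-((n : ℝ) * ((n : ℝ) - 1) / ((m : ℝ) - (n : ℝ) + 1)) * (1 / 2))
        ≤ ∏ k ∈ Finset.range n, (1 - (k : ℝ) / (m : ℝ)) ∧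
    ∏ k ∈ Finset.range n, (1 - (k : ℝ) / (m : ℝ))
        ≤ Real.exp (-((n : ℝ) * ((n : ℝ) - 1)) / (2 * (m : ℝ))) := by
  have hm : (0:ℝ) < m := by
    have : 0 < m := lt_of_lt_of_le hn hnm
    exact_mod_cast this
  have hnm' : (n:ℝ) ≤ m := by exact_mod_cast hnm
  have hsum : ∑ k ∈ Finset.range n, (k:ℝ) = (n:ℝ) * ((n:ℝ) - 1) / 2 := by
    have := Finset.sum_range_id_mul_two n
    have h2 : ((∑ i ∈ Finset.range n, i : ℕ) : ℝ) * 2 = (n:ℝ) * ((n:ℝ) - 1) := by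
      rw [← Nat.cast_ofNat, ← Nat.cast_mul, this]
      rcases n with _ | k
      · simp
      · push_cast; ring
    push_cast at h2 ⊢
    linarith
  have hfac_nonneg : ∀ k ∈ Finset.range n, (0:ℝ) ≤ 1 - (k:ℝ)/m := by
    intro k hk
    have hk' : (k:ℝ) ≤ m := by
      have : k < n := Finset.mem_range.mp hk
      have : (k:ℝ) < n := by exact_mod_cast this
      linarith
    have : (k:ℝ)/m ≤ 1 := by rw [div_le_one hm]; linarith
    linarith
  constructor
  · -- lower bound
    have key : ∀ k ∈ Finset.range n,
        Real.exp (-((k:ℝ) / ((m:ℝ) - (n:ℝ) + 1))) ≤ 1 - (k:ℝ)/m := by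
      intro k hk
      have hkn : k < n := Finset.mem_range.mp hk
      have hkn' : (k:ℝ) ≤ (n:ℝ) - 1 := by
        have : (k:ℝ) + 1 ≤ n := by exact_mod_cast hkn
        linarith
      have hk0 : (0:ℝ) ≤ k := Nat.cast_nonneg k
      have ha : (0:ℝ) < (m:ℝ) - (n:ℝ) + 1 := by linarith
      have hmk : (0:ℝ) < (m:ℝ) - k := by linarith
      have h1 : (k:ℝ)/((m:ℝ) - k) ≤ (k:ℝ)/((m:ℝ) - (n:ℝ) + 1) :=
        div_le_div_of_nonneg_left hk0 ha (by linarith) |>.trans_eq rfl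
      have h2 : Real.exp (-((k:ℝ)/((m:ℝ) - (n:ℝ) + 1))) ≤
          Real.exp (-((k:ℝ)/((m:ℝ) - k))) := Real.exp_le_exp.mpr (by linarith)
      refine h2.trans ?_
      -- exp(-(k/(m-k))) ≤ 1 - k/m = (m-k)/m
      have h3 : (k:ℝ)/((m:ℝ) - k) + 1 ≤ Real.exp ((k:ℝ)/((m:ℝ) - k)) :=
        Real.add_one_le_exp _
      have h4 : (m:ℝ)/((m:ℝ) - k) ≤ Real.exp ((k:ℝ)/((m:ℝ) - k)) := by
        have : (m:ℝ)/((m:ℝ) - k) = (k:ℝ)/((m:ℝ) - k) + 1 := by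
          field_simp
          ring
        linarith
      rw [Real.exp_neg]
      rw [inv_le_comm₀ (Real.exp_pos _) (by
        have : (0:ℝ) < ((m:ℝ) - k)/m := div_pos hmk hm
        have : 1 - (k:ℝ)/m = ((m:ℝ) - k)/m := by field_simp
        linarith)]
      have heq : (1 - (k:ℝ)/m)⁻¹ = (m:ℝ)/((m:ℝ) - k) := by
        rw [eq_div_iff hmk.ne']
        field_simp
      rw [heq]
      exact h4
    calc Real.exp (-((n : ℝ) * ((n : ℝ) - 1) / ((m : ℝ) - (n : ℝ) + 1)) * (1 / 2))
        = ∏ k ∈ Finset.range n, Real.exp (-((k:ℝ) / ((m:ℝ) - (n:ℝ) + 1))) := by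
          rw [← Real.exp_sum]
          congr 1
          simp only [← neg_div, ← Finset.sum_div, Finset.sum_neg_distrib]
          rw [hsum]; ring
      _ ≤ ∏ k ∈ Finset.range n, (1 - (k:ℝ)/m) :=
          Finset.prod_le_prod (fun k _ => (Real.exp_pos _).le) key
  · calc ∏ k ∈ Finset.range n, (1 - (k:ℝ)/m)
        ≤ ∏ k ∈ Finset.range n, Real.exp (-((k:ℝ)/m)) := by
          refine Finset.prod_le_prod hfac_nonneg ?_
          intro k _
          have := Real.add_one_le_exp (-((k:ℝ)/m))
          linarith
      _ = Real.exp (-((n : ℝ) * ((n : ℝ) - 1)) / (2 * (m : ℝ))) := by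
          rw [← Real.exp_sum]
          congr 1
          simp only [← neg_div, ← Finset.sum_div, Finset.sum_neg_distrib]
          rw [hsum]; ring
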